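/- Let n ≥ 2. Then det N = (49√3/75) · [ ((2+√3)/7)^{n+1} − ((2−√3)/7)^{n+1} ]. -/

import Mathlib

/-! Expanding along the last row, the determinant `D k` of a `k × k` tridiagonal matrix with
diagonal `a`, superdiagonal `b` and subdiagonal `c` obeys the continuant recurrence
`D (k + 2) = a (k + 1) * D (k + 1) - b k * c k * D k`. For `N` the recurrence is
`D (m + 2) = 4/7 * D (m + 1) - 1/49 * D m` away from the first and last rows; its characteristic
roots are `(2 ± √3) / 7`, which gives `D m` in closed form for `1 ≤ m ≤ n`, and the last row then
gives `det N = 3/5 * D n - 1/35 * D (n - 1)`. -/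

/-- The tridiagonal matrix `N` (of size `(n+1) × (n+1)`). -/
noncomputable def Nmat (n : ℕ) : Matrix (Fin (n+1)) (Fin (n+1)) ℝ :=
  Matrix.of fun i j =>
    if i = j then (if i.val = 0 ∨ i.val = n then 3/5 else 4/7)
    else if i.val + 1 = j.val ∨ j.val + 1 = i.val then
      (if min i.val j.val = 0 ∨ max i.val j.val = n then -(1/Real.sqrt 35) else -(1/7))
    else 0

section Tridiagonal

variable {R : Type*} [CommRing R]

def tridiag (a b c : ℕ → R) (k : ℕ) : Matrix (Fin k) (Fin k) R :=
  Matrix.of fun i j =>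
    if (i : ℕ) = j then a i
    else if (i : ℕ) + 1 = j then b i
    else if (j : ℕ) + 1 = i then c j
    else 0

def continuant (a p : ℕ → R) : ℕ → R
  | 0 => 1
  | 1 => a 0
  | k + 2 => a (k + 1) * continuant a p (k + 1) - p k * continuant a p k

theorem Matrix.det_succ_of_castSucc_last_eq_zero {k : ℕ} (M : Matrix (Fin (k + 1)) (Fin (k + 1)) R)
    (h : ∀ i : Fin k, M i.castSucc (Fin.last k) = 0) :
    M.det = M (Fin.last k) (Fin.last k) * (M.submatrix Fin.castSucc Fin.castSucc).det := by
  rw [Matrix.det_succ_column M (Fin.last k), Fin.sum_univ_castSucc,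
    Finset.sum_eq_zero fun i _ => by rw [h i, mul_zero, zero_mul], zero_add, Fin.succAbove_last,
    Fin.val_last, ← two_mul, pow_mul, neg_one_sq, one_pow, one_mul]

variable (a b c : ℕ → R)

theorem tridiag_apply_eq_zero {k : ℕ} {i j : Fin k} (h : (i : ℕ) + 1 < j ∨ (j : ℕ) + 1 < i) :
    tridiag a b c k i j = 0 := by
  simp only [tridiag, Matrix.of_apply]
  rw [if_neg (by omega), if_neg (by omega), if_neg (by omega)]

theorem tridiag_submatrix_castSucc (k : ℕ) :
    (tridiag a b c (k + 1)).submatrix Fin.castSucc Fin.castSucc = tridiag a b c k := by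
  ext i j
  simp [tridiag]

theorem det_tridiag : ∀ k, (tridiag a b c k).det = continuant a (b * c) k
  | 0 => by simp [continuant]
  | 1 => by simp [continuant, tridiag, Matrix.det_unique]
  | k + 2 => by
    have hcol : (Fin.last k).castSucc.succAbove ∘ Fin.castSucc = Fin.castSucc ∘ Fin.castSucc :=
      funext fun i => Fin.succAbove_castSucc_of_lt _ _ (Fin.castSucc_lt_last i)
    have hminor : ((tridiag a b c (k + 2)).submatrix Fin.castSucc
        (Fin.last k).castSucc.succAbove).det = b k * continuant a (b * c) k := by
      rw [Matrix.det_succ_of_castSucc_last_eq_zero _ fun i => ?_]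
      · rw [Matrix.submatrix_submatrix, hcol, ← Matrix.submatrix_submatrix,
          tridiag_submatrix_castSucc, tridiag_submatrix_castSucc, det_tridiag k]
        simp [tridiag]
      · exact tridiag_apply_eq_zero _ _ _ (by simp)
    have hsub : tridiag a b c (k + 2) (Fin.last (k + 1)) (Fin.last k).castSucc = c k := by
      simp [tridiag, show k + 1 + 1 ≠ k by omega]
    have hdiag : tridiag a b c (k + 2) (Fin.last (k + 1)) (Fin.last (k + 1)) = a (k + 1) := by
      simp [tridiag]
    have hodd : (-1 : R) ^ (k + 1 + k) = -1 := Odd.neg_one_pow ⟨k, by ring⟩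
    have heven : (-1 : R) ^ (k + 1 + (k + 1)) = 1 := Even.neg_one_pow ⟨k + 1, rfl⟩
    rw [Matrix.det_succ_row _ (Fin.last (k + 1)), Fin.sum_univ_castSucc, Fin.sum_univ_castSucc,
      Finset.sum_eq_zero fun j _ => by
        rw [tridiag_apply_eq_zero _ _ _ (by simp), mul_zero, zero_mul],
      Fin.succAbove_last, tridiag_submatrix_castSucc, hminor, det_tridiag (k + 1)]
    simp only [hsub, hdiag, Fin.val_last, Fin.val_castSucc, hodd, heven, continuant,
      Pi.mul_apply]
    ring

end Tridiagonal

theorem eq_mul_pow_add_mul_pow_of_recurrence {R : Type*} [CommRing R] {u : ℕ → R}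
    {α β A B : R} {n : ℕ}
    (hrec : ∀ m, m + 2 ≤ n → u (m + 2) = (α + β) * u (m + 1) - α * β * u m)
    (h0 : u 0 = A + B) (h1 : u 1 = A * α + B * β) :
    ∀ m ≤ n, u m = A * α ^ m + B * β ^ m
  | 0, _ => by simp [h0]
  | 1, _ => by simp [h1]
  | m + 2, hm => by
    rw [hrec m hm, eq_mul_pow_add_mul_pow_of_recurrence hrec h0 h1 (m + 1) (by omega),
      eq_mul_pow_add_mul_pow_of_recurrence hrec h0 h1 m (by omega)]
    ring

namespace Nmat

noncomputable def diagSeq (n i : ℕ) : ℝ := if i = 0 ∨ i = n then 3 / 5 else 4 / 7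

noncomputable def offDiagSeq (n i : ℕ) : ℝ := if i = 0 ∨ i + 1 = n then -(1 / √35) else -(1 / 7)

theorem eq_tridiag (n : ℕ) :
    Nmat n = tridiag (diagSeq n) (offDiagSeq n) (offDiagSeq n) (n + 1) := by
  ext i j
  simp only [Nmat, tridiag, Matrix.of_apply, diagSeq, offDiagSeq, Fin.ext_iff]
  split_ifs <;> first | rfl | omega

theorem offDiagSeq_mul_self (n i : ℕ) :
    offDiagSeq n i * offDiagSeq n i = if i = 0 ∨ i + 1 = n then 1 / 35 else 1 / 49 := by
  have h35 : √35 ^ 2 = 35 := Real.sq_sqrt (by norm_num)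
  simp only [offDiagSeq]
  split_ifs
  · field_simp
    exact h35.symm
  · norm_num

/-- The first row differs from the interior ones, so the closed form only holds from `m + 1 = 1`
on (at `0` it would give `7/5`, not `1`). -/
theorem continuant_succ_eq_of_lt (n : ℕ) (hn : 2 ≤ n) {m : ℕ} (hm : m < n) :
    continuant (diagSeq n) (offDiagSeq n * offDiagSeq n) (m + 1)
      = 7 / 30 * ((3 + √3) * ((2 + √3) / 7) ^ (m + 1) + (3 - √3) * ((2 - √3) / 7) ^ (m + 1)) := by
  have h3 : √3 ^ 2 = 3 := Real.sq_sqrt (by norm_num)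
  have closed_form := eq_mul_pow_add_mul_pow_of_recurrence
    (u := fun m => continuant (diagSeq n) (offDiagSeq n * offDiagSeq n) (m + 1))
    (α := (2 + √3) / 7) (β := (2 - √3) / 7)
    (A := 7 / 30 * (3 + √3) * ((2 + √3) / 7)) (B := 7 / 30 * (3 - √3) * ((2 - √3) / 7))
    (n := n - 1) (fun k hk => ?_) ?_ ?_ m (by omega)
  · simp only [closed_form, pow_succ]
    ring
  · rw [continuant.eq_3 _ _ (k + 1), Pi.mul_apply, offDiagSeq_mul_self, diagSeq, if_neg (by omega),
      if_neg (by omega)]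
    linear_combination
      (-(1 / 49) * continuant (diagSeq n) (offDiagSeq n * offDiagSeq n) (k + 1)) * h3
  · simp [continuant, diagSeq]
    linear_combination (-1 / 15) * h3
  · simp [continuant, offDiagSeq_mul_self, diagSeq, show 1 ≠ n by omega]
    linear_combination (-1 / 15) * h3

end Nmat

/-- For `n ≥ 2`, `det N = (49√3/75)·[((2+√3)/7)^{n+1} − ((2−√3)/7)^{n+1}]`. -/
theorem det_Nmat (n : ℕ) (hn : 2 ≤ n) :
    (Nmat n).det
      = (49 * Real.sqrt 3 / 75)
        * (((2 + Real.sqrt 3) / 7)^(n+1) - ((2 - Real.sqrt 3) / 7)^(n+1)) := by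
  obtain ⟨k, rfl⟩ : ∃ k, n = k + 2 := ⟨n - 2, by omega⟩
  rw [Nmat.eq_tridiag, det_tridiag, continuant, Pi.mul_apply,
    Nmat.continuant_succ_eq_of_lt _ hn (by omega : k + 1 < k + 2),
    Nmat.continuant_succ_eq_of_lt _ hn (by omega : k < k + 2), Nmat.offDiagSeq_mul_self,
    Nmat.diagSeq, if_pos (by omega), if_pos (by omega)]
  have h3 : √3 ^ 2 = 3 := Real.sq_sqrt (by norm_num)
  simp only [pow_succ _ (k + 1 + 1), pow_succ _ (k + 1)]
  linear_combination ((-(1 / 30) - √3 / 75) * ((2 + √3) / 7) ^ (k + 1)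
    + (-(1 / 30) + √3 / 75) * ((2 - √3) / 7) ^ (k + 1)) * h3
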